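/- Let (A, ≺) be a subordination algebra with a ⇒_≺ b := ⋁{c | a ∧ c ≺ b}. Then the inequality a ⇒_≺ (b ∨ c) ≤ (a ⇒_≺ b) ∨ (a ⇒_≺ c) holds in A^δ for all a, b, c ∈ A if and only if for all a, b, c, d ∈ A: d ∧ a ≺ b ∨ c implies there exist e, f ∈ A with d ≤ e ∨ f, e ∧ a ≺ b, and f ∧ a ≺ c. -/

import Mathlib

/-- A subordination algebra relation on a bounded distributive lattice. -/
structure SubordAlg (A : Type*) [DistribLattice A] [BoundedOrder A] where
  prec : A → A → Prop
  prec_bot : prec ⊥ ⊥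
  prec_top : prec ⊤ ⊤
  prec_and : ∀ {a b c : A}, prec a b → prec a c → prec a (b ⊓ c)
  prec_or : ∀ {a b c : A}, prec a c → prec b c → prec (a ⊔ b) c
  prec_wosi : ∀ {a b c d : A}, a ≤ b → prec b c → c ≤ d → prec a d

/-- A presentation of the canonical extension of a bounded (distributive) lattice `A`:
a complete lattice `Aδ` together with a dense and compact lattice embedding. -/
structure CanExt (A : Type*) [DistribLattice A] [BoundedOrder A]
    (Aδ : Type*) [CompleteLattice Aδ] where
  e : A → Aδ
  le_iff : ∀ a b : A, a ≤ b ↔ e a ≤ e b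
  map_inf : ∀ a b : A, e (a ⊓ b) = e a ⊓ e b
  map_sup : ∀ a b : A, e (a ⊔ b) = e a ⊔ e b
  map_bot : e ⊥ = ⊥
  map_top : e ⊤ = ⊤
  dense_closed : ∀ u : Aδ,
    u = sSup {k | (∃ F : Set A, F.Nonempty ∧ k = sInf (e '' F)) ∧ k ≤ u}
  dense_open : ∀ u : Aδ,
    u = sInf {o | (∃ I : Set A, I.Nonempty ∧ o = sSup (e '' I)) ∧ u ≤ o}
  compact : ∀ F I : Set A, F.Nonempty → I.Nonempty →
    sInf (e '' F) ≤ sSup (e '' I) →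
    ∃ F' I' : Set A, F' ⊆ F ∧ I' ⊆ I ∧ F'.Finite ∧ I'.Finite ∧
      sInf (e '' F') ≤ sSup (e '' I')

/-- Closed elements of the canonical extension: meets of nonempty subsets of `A`. -/
def CanExt.IsClosed {A : Type*} [DistribLattice A] [BoundedOrder A]
    {Aδ : Type*} [CompleteLattice Aδ] (C : CanExt A Aδ) (k : Aδ) : Prop :=
  ∃ F : Set A, F.Nonempty ∧ k = sInf (C.e '' F)

/-- Open elements of the canonical extension: joins of nonempty subsets of `A`. -/
def CanExt.IsOpen {A : Type*} [DistribLattice A] [BoundedOrder A]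
    {Aδ : Type*} [CompleteLattice Aδ] (C : CanExt A Aδ) (o : Aδ) : Prop :=
  ∃ I : Set A, I.Nonempty ∧ o = sSup (C.e '' I)

/-- The slanted implication `a ⇒_≺ b := ⋁{c | a ⊓ c ≺ b}` induced by a relation. -/
def slantImp {A : Type*} [DistribLattice A] [BoundedOrder A]
    {Aδ : Type*} [CompleteLattice Aδ] (C : CanExt A Aδ)
    (R : A → A → Prop) (a b : A) : Aδ :=
  sSup (C.e '' {c | R (a ⊓ c) b})

/-- The slanted co-implication `a ⩾_≺ b := ⋀{c | b ≺ a ⊔ c}` induced by a relation. -/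
def slantCoimp {A : Type*} [DistribLattice A] [BoundedOrder A]
    {Aδ : Type*} [CompleteLattice Aδ] (C : CanExt A Aδ)
    (R : A → A → Prop) (a b : A) : Aδ :=
  sInf (C.e '' {c | R b (a ⊔ c)})

/-- The slanted negation `¬a := ⋁{c | a ⊓ c ≺ ⊥}`. -/
def slantNeg {A : Type*} [DistribLattice A] [BoundedOrder A]
    {Aδ : Type*} [CompleteLattice Aδ] (C : CanExt A Aδ)
    (R : A → A → Prop) (a : A) : Aδ :=
  sSup (C.e '' {c | R (a ⊓ c) ⊥})

/-- The slanted co-negation `∼a := ⋀{c | ⊤ ≺ a ⊔ c}`. -/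
def slantSim {A : Type*} [DistribLattice A] [BoundedOrder A]
    {Aδ : Type*} [CompleteLattice Aδ] (C : CanExt A Aδ)
    (R : A → A → Prop) (a : A) : Aδ :=
  sInf (C.e '' {c | R ⊤ (a ⊔ c)})

/-- A slanted Heyting algebra over a canonical extension `C`. -/
structure SlantedHeyting (A : Type*) [DistribLattice A] [BoundedOrder A]
    (Aδ : Type*) [CompleteLattice Aδ] (C : CanExt A Aδ) where
  imp : A → A → Aδ
  imp_open : ∀ a b : A, C.IsOpen (imp a b)
  imp_inf : ∀ a b₁ b₂ : A, imp a (b₁ ⊓ b₂) = imp a b₁ ⊓ imp a b₂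
  imp_top : ∀ a : A, imp a ⊤ = ⊤
  sup_imp : ∀ a₁ a₂ b : A, imp (a₁ ⊔ a₂) b = imp a₁ b ⊓ imp a₂ b
  bot_imp : ∀ b : A, imp ⊥ b = ⊤
  resid : ∀ a b c : A, C.e c ≤ imp a b ↔ C.e (a ⊓ c) ≤ imp ⊤ b

/-- A slanted co-Heyting algebra over a canonical extension `C`. -/
structure SlantedCoHeyting (A : Type*) [DistribLattice A] [BoundedOrder A]
    (Aδ : Type*) [CompleteLattice Aδ] (C : CanExt A Aδ) where
  coimp : A → A → Aδ
  coimp_closed : ∀ a b : A, C.IsClosed (coimp a b)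
  coimp_sup : ∀ a b₁ b₂ : A, coimp a (b₁ ⊔ b₂) = coimp a b₁ ⊔ coimp a b₂
  coimp_bot : ∀ a : A, coimp a ⊥ = ⊥
  inf_coimp : ∀ a₁ a₂ b : A, coimp (a₁ ⊓ a₂) b = coimp a₁ b ⊔ coimp a₂ b
  top_coimp : ∀ b : A, coimp ⊤ b = ⊥
  resid : ∀ a b c : A, coimp a b ≤ C.e c ↔ coimp ⊥ b ≤ C.e (a ⊔ c)

/-- The π-extension of a slanted implication on a closed first argument and open
second argument: `k ⇒^π o := ⋁{a ⇒ b | k ≤ a, b ≤ o}`. -/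
def impPiKO {A : Type*} [DistribLattice A] [BoundedOrder A]
    {Aδ : Type*} [CompleteLattice Aδ] {C : CanExt A Aδ}
    (H : SlantedHeyting A Aδ C) (k o : Aδ) : Aδ :=
  sSup {u | ∃ a b : A, u = H.imp a b ∧ k ≤ C.e a ∧ C.e b ≤ o}

/-- The π-extension of a slanted implication on arbitrary arguments. -/
def impPi {A : Type*} [DistribLattice A] [BoundedOrder A]
    {Aδ : Type*} [CompleteLattice Aδ] {C : CanExt A Aδ}
    (H : SlantedHeyting A Aδ C) (u v : Aδ) : Aδ :=
  sInf {w | ∃ k o : Aδ, C.IsClosed k ∧ C.IsOpen o ∧ k ≤ u ∧ v ≤ o ∧ w = impPiKO H k o}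

/-!
The sets `{c | a ⊓ c ≺ b}` are ideals of `A`, and `a ⇒_≺ b` is the join of such an ideal in `Aδ`.
Taking joins in `Aδ` is an order embedding of the ideals of `A` into `Aδ` (by compactness) which
preserves binary joins, so the inequality in `Aδ` is an inclusion of ideals of `A`, and the
membership `d ∈ I ⊔ J` of the join of two ideals unfolds to `d ≤ e ⊔ f` with `e ∈ I`, `f ∈ J`.
-/

namespace SubordAlg

variable {A : Type*} [DistribLattice A] [BoundedOrder A] (S : SubordAlg A)

def slantIdeal (a b : A) : Order.Ideal A where
  carrier := {c | S.prec (a ⊓ c) b}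
  lower' _ _ hxy hy := S.prec_wosi (inf_le_inf_left a hxy) hy le_rfl
  nonempty' := ⟨⊥, S.prec_wosi inf_le_right S.prec_bot bot_le⟩
  directed' _ hx _ hy :=
    ⟨_, S.prec_wosi (inf_sup_left _ _ _).le (S.prec_or hx hy) le_rfl, le_sup_left, le_sup_right⟩

lemma mem_slantIdeal {a b c : A} : c ∈ S.slantIdeal a b ↔ S.prec (c ⊓ a) b := by
  rw [inf_comm]; rfl

lemma slantIdeal_sup_le_iff {a b c : A} :
    S.slantIdeal a (b ⊔ c) ≤ S.slantIdeal a b ⊔ S.slantIdeal a c ↔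
      ∀ d, S.prec (d ⊓ a) (b ⊔ c) → ∃ e f, d ≤ e ⊔ f ∧ S.prec (e ⊓ a) b ∧ S.prec (f ⊓ a) c := by
  simp only [SetLike.le_def, Order.Ideal.mem_sup, mem_slantIdeal]
  exact forall_congr' fun d ↦ imp_congr_right fun _ ↦
    ⟨fun ⟨e, he, f, hf, hd⟩ ↦ ⟨e, f, hd, he, hf⟩, fun ⟨e, f, hd, he, hf⟩ ↦ ⟨e, he, f, hf, hd⟩⟩

end SubordAlg

namespace CanExt

variable {A : Type*} [DistribLattice A] [BoundedOrder A] {Aδ : Type*} [CompleteLattice Aδ]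
  (C : CanExt A Aδ)

def idealSup (I : Order.Ideal A) : Aδ :=
  sSup (C.e '' I)

lemma e_mono : Monotone C.e := fun a b ↦ (C.le_iff a b).1

lemma idealSup_mono : Monotone C.idealSup := fun _ _ h ↦ sSup_le_sSup (Set.image_mono h)

lemma e_le_idealSup {I : Order.Ideal A} {d : A} (hd : d ∈ I) : C.e d ≤ C.idealSup I :=
  le_sSup (Set.mem_image_of_mem _ hd)

lemma mem_of_e_le_idealSup {I : Order.Ideal A} {d : A} (h : C.e d ≤ C.idealSup I) : d ∈ I := by
  obtain ⟨F, T, hF, hT, -, hTfin, hFT⟩ :=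
    C.compact {d} I ⟨d, rfl⟩ I.nonempty (by rwa [Set.image_singleton, sInf_singleton])
  have hdF : C.e d ≤ sInf (C.e '' F) := le_sInf <| by
    rintro _ ⟨x, hx, rfl⟩
    rw [hF hx]
  have hTs : sSup (C.e '' T) ≤ C.e (hTfin.toFinset.sup id) := sSup_le <| by
    rintro _ ⟨x, hx, rfl⟩
    exact C.e_mono (Finset.le_sup (f := id) (hTfin.mem_toFinset.2 hx))
  refine I.lower ((C.le_iff _ _).2 (hdF.trans (hFT.trans hTs))) ?_
  exact (Order.Ideal.finsetSup_mem_iff I).2 fun x hx ↦ hT (hTfin.mem_toFinset.1 hx)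

lemma idealSup_le_idealSup_iff {I J : Order.Ideal A} : C.idealSup I ≤ C.idealSup J ↔ I ≤ J :=
  ⟨fun h _ hd ↦ C.mem_of_e_le_idealSup ((C.e_le_idealSup hd).trans h), fun h ↦ C.idealSup_mono h⟩

lemma idealSup_sup (I J : Order.Ideal A) : C.idealSup (I ⊔ J) = C.idealSup I ⊔ C.idealSup J := by
  refine le_antisymm (sSup_le ?_) (sup_le (C.idealSup_mono le_sup_left)
    (C.idealSup_mono le_sup_right))
  rintro _ ⟨d, ⟨e, he, f, hf, hd⟩, rfl⟩
  calc C.e d ≤ C.e e ⊔ C.e f := by rw [← C.map_sup]; exact C.e_mono hd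
    _ ≤ C.idealSup I ⊔ C.idealSup J := sup_le_sup (C.e_le_idealSup he) (C.e_le_idealSup hf)

lemma slantImp_eq_idealSup (S : SubordAlg A) (a b : A) :
    slantImp C S.prec a b = C.idealSup (S.slantIdeal a b) :=
  rfl

end CanExt

theorem stmt18 {A : Type*} [DistribLattice A] [BoundedOrder A]
    {Aδ : Type*} [CompleteLattice Aδ] (C : CanExt A Aδ) (S : SubordAlg A) :
    (∀ a b c : A,
      slantImp C S.prec a (b ⊔ c) ≤ slantImp C S.prec a b ⊔ slantImp C S.prec a c) ↔
    (∀ a b c d : A, S.prec (d ⊓ a) (b ⊔ c) →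
      ∃ e f : A, d ≤ e ⊔ f ∧ S.prec (e ⊓ a) b ∧ S.prec (f ⊓ a) c) := by
  simp only [C.slantImp_eq_idealSup, ← C.idealSup_sup, C.idealSup_le_idealSup_iff,
    S.slantIdeal_sup_le_iff]
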